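/- Applying the unsharp POVM update ρ ↦ Σⱼ √Ōⱼ ρ √Ōⱼ to ρ̄₁ = |κ₁⟩⟨κ₁| yields ρ̄₁¹ = ρ̄₁ − λ²·√(γ₁(1−γ₁))·(|01⟩⟨10| + |10⟩⟨01|), where λ is the sharpness parameter of the POVM {Ōⱼ}. -/
import Mathlib


open scoped BigOperators Matrix

namespace SSDSE6

noncomputable def kappa1 (γ : ℝ) : Fin 2 × Fin 2 → ℂ :=
  fun p => if p = (0, 1) then (Real.sqrt γ : ℂ)
    else if p = (1, 0) then (Real.sqrt (1 - γ) : ℂ) else 0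

/-- |p⟩⟨q| in the computational basis of ℂ²⊗ℂ². -/
def ketbra (p q : Fin 2 × Fin 2) : Matrix (Fin 2 × Fin 2) (Fin 2 × Fin 2) ℂ :=
  fun r s => if r = p ∧ s = q then 1 else 0

/-- The entrywise square root of the diagonal POVM element Ō with (1+λ)²/4 weight on
|ab⟩, (1−λ)²/4 on the bit-flipped |a'b'⟩ and (1−λ²)/4 on the other two basis states. -/
noncomputable def sqrtObar (lam : ℝ) (a b : Fin 2) :
    Matrix (Fin 2 × Fin 2) (Fin 2 × Fin 2) ℂ :=
  Matrix.diagonal (fun p =>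
    if p = (a, b) then (((1 + lam) / 2 : ℝ) : ℂ)
    else if p = (1 - a, 1 - b) then (((1 - lam) / 2 : ℝ) : ℂ)
    else ((Real.sqrt (1 - lam^2) / 2 : ℝ) : ℂ))

set_option maxHeartbeats 1600000 in
theorem post_measurement_state (γ lam : ℝ) (hγ : γ ∈ Set.Ioo (0:ℝ) 1)
    (hlam : lam ∈ Set.Icc (0:ℝ) 1) :
    (sqrtObar lam 0 1 * Matrix.vecMulVec (kappa1 γ) (star (kappa1 γ)) * sqrtObar lam 0 1
      + sqrtObar lam 0 0 * Matrix.vecMulVec (kappa1 γ) (star (kappa1 γ)) * sqrtObar lam 0 0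
      + sqrtObar lam 1 0 * Matrix.vecMulVec (kappa1 γ) (star (kappa1 γ)) * sqrtObar lam 1 0
      + sqrtObar lam 1 1 * Matrix.vecMulVec (kappa1 γ) (star (kappa1 γ)) * sqrtObar lam 1 1)
    = Matrix.vecMulVec (kappa1 γ) (star (kappa1 γ))
      - ((lam^2 * Real.sqrt (γ * (1 - γ)) : ℝ) : ℂ) •
          (ketbra (0, 1) (1, 0) + ketbra (1, 0) (0, 1)) := by
  obtain ⟨hγ0, hγ1⟩ := hγ
  obtain ⟨hl0, hl1⟩ := hlam
  have hs : Real.sqrt (1 - lam ^ 2) * Real.sqrt (1 - lam ^ 2) = 1 - lam ^ 2 :=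
    Real.mul_self_sqrt (by nlinarith)
  have hg : Real.sqrt γ * Real.sqrt γ = γ := Real.mul_self_sqrt hγ0.le
  have hg1 : Real.sqrt (1 - γ) * Real.sqrt (1 - γ) = 1 - γ :=
    Real.mul_self_sqrt (by linarith)
  have hgg : Real.sqrt γ * Real.sqrt (1 - γ) = Real.sqrt (γ * (1 - γ)) :=
    (Real.sqrt_mul hγ0.le _).symm
  have key : ∀ (a b : Fin 2) (p q : Fin 2 × Fin 2),
      (sqrtObar lam a b * Matrix.vecMulVec (kappa1 γ) (star (kappa1 γ)) * sqrtObar lam a b) p q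
        = sqrtObar lam a b p p * (kappa1 γ p * star (kappa1 γ q)) * sqrtObar lam a b q q := by
    intro a b p q
    rw [show sqrtObar lam a b * Matrix.vecMulVec (kappa1 γ) (star (kappa1 γ)) * sqrtObar lam a b
        = sqrtObar lam a b * (Matrix.vecMulVec (kappa1 γ) (star (kappa1 γ)) * sqrtObar lam a b)
      from mul_assoc _ _ _]
    rw [sqrtObar, Matrix.diagonal_mul, Matrix.mul_diagonal, Matrix.vecMulVec_apply,
      Pi.star_apply]
    simp [sqrtObar, Matrix.diagonal_apply_eq]
    ring
  funext p q
  simp only [Matrix.add_apply, Matrix.sub_apply, Matrix.smul_apply, key,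
    Matrix.vecMulVec_apply, Pi.star_apply]
  obtain ⟨i, j⟩ := p
  obtain ⟨k, l⟩ := q
  have hsC : ((Real.sqrt (1 - lam ^ 2) : ℝ) : ℂ) * ((Real.sqrt (1 - lam ^ 2) : ℝ) : ℂ)
      = 1 - (lam : ℂ) ^ 2 := by exact_mod_cast congrArg Complex.ofReal hs
  have hggC : ((Real.sqrt γ : ℝ) : ℂ) * ((Real.sqrt (1 - γ) : ℝ) : ℂ)
      = ((Real.sqrt (γ * (1 - γ)) : ℝ) : ℂ) := by exact_mod_cast congrArg Complex.ofReal hgg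
  fin_cases i <;> fin_cases j <;> fin_cases k <;> fin_cases l <;>
    · simp only [sqrtObar, kappa1, ketbra, Matrix.diagonal_apply_eq, Matrix.add_apply,
        smul_eq_mul]
      norm_num [Prod.ext_iff, Fin.ext_iff]
      all_goals first
        | linear_combination ((((Real.sqrt γ : ℝ) : ℂ) * ((Real.sqrt (1 - γ) : ℝ) : ℂ)) / 2) * hsC
            - (lam : ℂ) ^ 2 * hggC
        | linear_combination ((((Real.sqrt γ : ℝ) : ℂ) * ((Real.sqrt γ : ℝ) : ℂ)) / 2) * hsC
        | linear_combination
            ((((Real.sqrt (1 - γ) : ℝ) : ℂ) * ((Real.sqrt (1 - γ) : ℝ) : ℂ)) / 2) * hsC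

end SSDSE6
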